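/- Given 0 < σ < m_min and integer n ≥ 2, set τ = (0.81 e^{−3/2}/Ω)(σ/m_min)^{1/(2n−2)}. There exist complex amplitudes a_1, …, a_{2n−1} with |a_j| ≥ m_min and points t_j = (−n+j)τ·e_1 ∈ R^k (j = 1, …, 2n−1, where e_1 is the first standard basis vector) such that the measures μ = Σ_{j=1}^n a_j δ_{t_j} (n points) and μ̂ = Σ_{j=n+1}^{2n−1} (−a_j) δ_{t_j} (n−1 points) satisfy |F μ̂(ω) − F μ(ω)| < σ for all ω ∈ R^k with ||ω||_2 ≤ Ω; moreover μ has minimum amplitude m_min and minimum support separation τ. -/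

import Mathlib

/-!
Take `a_j = m_min (-1)^j C(2n-2, j)` for `j = 0, …, 2n-2`. All points lie on the `e₁`-axis, so
`Fμ̂(ω) - Fμ(ω) = -Σ_j a_j e^{i t_j·ω}` only depends on `θ = τ ω₁`, and by the binomial theorem
it equals `-m_min e^{i(1-n)θ} (1 - e^{iθ})^{2n-2}`. Since `|1 - e^{iθ}| ≤ |θ| ≤ τΩ`, its modulus
is at most `m_min (τΩ)^{2n-2} = (0.81 e^{-3/2})^{2n-2} σ < σ`.
-/

open Real Complex Finset

/-- `τ = (0.81 e^{−3/2}/Ω)(σ/m_min)^{1/(2n−2)}`. -/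
noncomputable def tauVal (Ω σ mmin : ℝ) (n : ℕ) : ℝ :=
  0.81 * Real.exp (-(3 / 2)) / Ω * (σ / mmin) ^ ((1 : ℝ) / (2 * (n : ℝ) - 2))

/-- The point `(−n+j)τ·e₁ ∈ ℝ^k` (with the 1-based index `j` replaced by the 0-based
index `j` of `Fin (2n−1)`, so the coefficient is `(j+1−n)τ`). -/
noncomputable def tPt (k n : ℕ) (hk : 1 ≤ k) (τ : ℝ) (j : Fin (2 * n - 1)) :
    EuclideanSpace ℝ (Fin k) :=
  EuclideanSpace.single ⟨0, hk⟩ (((j : ℝ) + 1 - (n : ℝ)) * τ)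

lemma sum_range_neg_one_pow_mul_choose_mul_pow {R : Type*} [CommRing R] (z : R) (N : ℕ) :
    ∑ j ∈ range (N + 1), (-1) ^ j * (N.choose j : R) * z ^ j = (1 - z) ^ N := by
  rw [sub_eq_neg_add, add_pow]
  refine sum_congr rfl fun j _ => ?_
  rw [neg_pow, one_pow]
  ring

noncomputable def alternatingBinomialAmp (m : ℝ) (N j : ℕ) : ℂ := m * (-1) ^ j * N.choose j

lemma norm_alternatingBinomialAmp {m : ℝ} (hm : 0 ≤ m) (N j : ℕ) :
    ‖alternatingBinomialAmp m N j‖ = m * N.choose j := by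
  simp [alternatingBinomialAmp, abs_of_nonneg hm]

lemma le_norm_alternatingBinomialAmp {m : ℝ} (hm : 0 ≤ m) {N j : ℕ} (hj : j ≤ N) :
    m ≤ ‖alternatingBinomialAmp m N j‖ := by
  rw [norm_alternatingBinomialAmp hm]
  exact le_mul_of_one_le_right hm (by exact_mod_cast Nat.choose_pos hj)

lemma sum_range_alternatingBinomialAmp_mul_exp (m : ℝ) (N : ℕ) (s θ : ℝ) :
    ∑ j ∈ range (N + 1), alternatingBinomialAmp m N j * exp (I * (((j + s) * θ : ℝ) : ℂ))
      = m * exp (I * ((s * θ : ℝ) : ℂ)) * (1 - exp (I * θ)) ^ N := by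
  rw [← sum_range_neg_one_pow_mul_choose_mul_pow, mul_sum]
  refine sum_congr rfl fun j _ => ?_
  rw [← Complex.exp_nat_mul, alternatingBinomialAmp]
  have hphase : I * (((j + s) * θ : ℝ) : ℂ) = I * ((s * θ : ℝ) : ℂ) + j * (I * θ) := by
    push_cast; ring
  rw [hphase, Complex.exp_add]
  ring

lemma norm_sum_range_alternatingBinomialAmp_mul_exp_le {m : ℝ} (hm : 0 ≤ m) (N : ℕ) (s θ : ℝ) :
    ‖∑ j ∈ range (N + 1), alternatingBinomialAmp m N j * exp (I * (((j + s) * θ : ℝ) : ℂ))‖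
      ≤ m * |θ| ^ N := by
  rw [sum_range_alternatingBinomialAmp_mul_exp, norm_mul, norm_mul, norm_exp_I_mul_ofReal,
    mul_one, norm_pow, norm_real, norm_of_nonneg hm, norm_sub_rev]
  gcongr
  exact norm_exp_I_mul_ofReal_sub_one_le

lemma sum_filter_le_neg_sub_sum_filter_lt {ι α M : Type*} [Fintype ι] [LinearOrder α]
    [AddCommGroup M] (g : ι → α) (b : α) (f : ι → M) :
    ∑ j ∈ univ.filter (fun j => b ≤ g j), -f j - ∑ j ∈ univ.filter (fun j => g j < b), f j
      = -∑ j, f j := by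
  rw [← sum_filter_add_sum_filter_not univ (fun j => g j < b) f, sum_neg_distrib]
  simp only [not_lt]
  abel

lemma pow_mul_rpow_one_div_lt {c x : ℝ} (hc₀ : 0 ≤ c) (hc₁ : c < 1) (hx : 0 < x) {N : ℕ}
    (hN : N ≠ 0) : (c * x ^ ((1 : ℝ) / N)) ^ N < x := by
  rw [mul_pow, ← rpow_natCast (x ^ _), ← rpow_mul hx.le, one_div_mul_cancel (by positivity),
    rpow_one]
  exact mul_lt_of_lt_one_left hx (pow_lt_one₀ hc₀ hc₁ hN)

section tauVal

variable {Ω σ mmin : ℝ} {n : ℕ}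

lemma tauVal_pos (hΩ : 0 < Ω) (hσ : 0 < σ) (hm : 0 < mmin) : 0 < tauVal Ω σ mmin n := by
  unfold tauVal
  have := div_pos hσ hm
  positivity

lemma tauVal_mul_pow_lt (hΩ : 0 < Ω) (hσ : 0 < σ) (hm : 0 < mmin) (hn : 2 ≤ n) :
    (tauVal Ω σ mmin n * Ω) ^ (2 * n - 2) < σ / mmin := by
  have hc₁ : 0.81 * Real.exp (-(3 / 2)) < 1 := by
    have := Real.exp_lt_one_iff.mpr (show -(3 / 2 : ℝ) < 0 by norm_num)
    nlinarith [Real.exp_pos (-(3 / 2))]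
  have hcast : 2 * (n : ℝ) - 2 = ((2 * n - 2 : ℕ) : ℝ) := by
    rw [Nat.cast_sub (by omega)]; push_cast; ring
  have hτΩ : tauVal Ω σ mmin n * Ω
      = 0.81 * Real.exp (-(3 / 2)) * (σ / mmin) ^ ((1 : ℝ) / ((2 * n - 2 : ℕ) : ℝ)) := by
    rw [tauVal, ← hcast]
    field_simp
  rw [hτΩ]
  exact pow_mul_rpow_one_div_lt (by positivity) hc₁ (div_pos hσ hm) (by omega)

end tauVal

section tPt

variable {k n : ℕ} {hk : 1 ≤ k} {τ : ℝ}

lemma norm_tPt_sub_tPt (p j : Fin (2 * n - 1)) :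
    ‖tPt k n hk τ p - tPt k n hk τ j‖ = |((p : ℕ) : ℝ) - (j : ℕ)| * |τ| := by
  rw [tPt, tPt, ← PiLp.single_sub, PiLp.norm_single, Real.norm_eq_abs, ← abs_mul]
  ring_nf

lemma abs_le_norm_tPt_sub_tPt {p j : Fin (2 * n - 1)} (hpj : p ≠ j) :
    |τ| ≤ ‖tPt k n hk τ p - tPt k n hk τ j‖ := by
  rw [norm_tPt_sub_tPt]
  refine le_mul_of_one_le_left (abs_nonneg τ) ?_
  have : (1 : ℤ) ≤ |((p : ℕ) : ℤ) - (j : ℕ)| := Int.one_le_abs (by omega)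
  exact_mod_cast this

lemma inner_tPt (j : Fin (2 * n - 1)) (ω : EuclideanSpace ℝ (Fin k)) :
    inner ℝ (tPt k n hk τ j) ω = (((j : ℕ) : ℝ) + (1 - n)) * (τ * ω ⟨0, hk⟩) := by
  rw [tPt, EuclideanSpace.inner_single_left]
  simp only [conj_trivial]
  ring

end tPt

/-- Lower bound construction for the number-detection resolution limit: given
`0 < σ < m_min`, `n ≥ 2` and `τ = (0.81 e^{−3/2}/Ω)(σ/m_min)^{1/(2n−2)}`, there exist
amplitudes `a_j` with `|a_j| ≥ m_min` at points `t_j = (−n+j)τ e₁`, `j = 1, …, 2n−1`, so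
that the `n`-point measure `μ = Σ_{j≤n} a_j δ_{t_j}` and the `(n−1)`-point measure
`μ̂ = Σ_{j>n} (−a_j) δ_{t_j}` satisfy `|Fμ̂(ω) − Fμ(ω)| < σ` for all `‖ω‖ ≤ Ω`; moreover
`μ` has minimum amplitude `m_min` and minimum support separation `τ`. -/
theorem number_detection_lower_bound (k n : ℕ) (hk : 1 ≤ k) (hn : 2 ≤ n)
    (Ω σ mmin : ℝ) (hΩ : 0 < Ω) (hσ : 0 < σ) (hσm : σ < mmin) :
    ∃ a : Fin (2 * n - 1) → ℂ,
      (∀ j, mmin ≤ ‖a j‖) ∧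
      (∃ j : Fin (2 * n - 1), (j : ℕ) < n ∧ ‖a j‖ = mmin) ∧
      (∀ p j : Fin (2 * n - 1), (p : ℕ) < n → (j : ℕ) < n → p ≠ j →
        tauVal Ω σ mmin n ≤
          ‖tPt k n hk (tauVal Ω σ mmin n) p - tPt k n hk (tauVal Ω σ mmin n) j‖) ∧
      (∃ p j : Fin (2 * n - 1), (p : ℕ) < n ∧ (j : ℕ) < n ∧ p ≠ j ∧
        ‖tPt k n hk (tauVal Ω σ mmin n) p - tPt k n hk (tauVal Ω σ mmin n) j‖
          = tauVal Ω σ mmin n) ∧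
      (∀ ω : EuclideanSpace ℝ (Fin k), ‖ω‖ ≤ Ω →
        ‖(∑ j ∈ Finset.univ.filter (fun j : Fin (2 * n - 1) => n ≤ (j : ℕ)),
              (-(a j)) * Complex.exp (Complex.I *
                ((inner ℝ (tPt k n hk (tauVal Ω σ mmin n) j) ω : ℝ) : ℂ))) -
            ∑ j ∈ Finset.univ.filter (fun j : Fin (2 * n - 1) => (j : ℕ) < n),
              a j * Complex.exp (Complex.I *
                ((inner ℝ (tPt k n hk (tauVal Ω σ mmin n) j) ω : ℝ) : ℂ))‖ < σ) := by
  have hm : 0 < mmin := hσ.trans hσm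
  have hτ : 0 < tauVal Ω σ mmin n := tauVal_pos hΩ hσ hm
  refine ⟨fun j => alternatingBinomialAmp mmin (2 * n - 2) j,
    fun j => le_norm_alternatingBinomialAmp hm.le (by omega),
    ⟨⟨0, by omega⟩, by simp; omega, by simp [norm_alternatingBinomialAmp hm.le]⟩,
    fun p j _ _ hpj => (le_abs_self _).trans (abs_le_norm_tPt_sub_tPt hpj),
    ⟨⟨1, by omega⟩, ⟨0, by omega⟩, by simp; omega, by simp; omega, by simp [Fin.ext_iff],
      by simp [norm_tPt_sub_tPt, abs_of_pos hτ]⟩,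
    fun ω hω => ?_⟩
  set τ := tauVal Ω σ mmin n
  simp only [neg_mul, sum_filter_le_neg_sub_sum_filter_lt, norm_neg, inner_tPt]
  rw [Fin.sum_univ_eq_sum_range (fun j => alternatingBinomialAmp mmin (2 * n - 2) j *
    exp (I * (((j + (1 - n)) * (τ * ω ⟨0, hk⟩) : ℝ) : ℂ))), show 2 * n - 1 = 2 * n - 2 + 1 by omega]
  have hθ : |τ * ω ⟨0, hk⟩| ≤ τ * Ω := by
    rw [abs_mul, abs_of_pos hτ]
    exact mul_le_mul_of_nonneg_left ((PiLp.norm_apply_le ω _).trans hω) hτ.le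
  calc _ ≤ mmin * |τ * ω ⟨0, hk⟩| ^ (2 * n - 2) :=
        norm_sum_range_alternatingBinomialAmp_mul_exp_le hm.le _ _ _
    _ ≤ mmin * (τ * Ω) ^ (2 * n - 2) := by gcongr
    _ < mmin * (σ / mmin) := by gcongr; exact tauVal_mul_pow_lt hΩ hσ hm hn
    _ = σ := by field_simp
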